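/- Suppose Λ(x) is positive definite, let s ∈ ℝ^U, set w := H(x)⁻¹·s and S := Λ(x)⁻¹·Λ(w)·Λ(x)⁻¹. Then tr(S·Λ(e_i)) = s_i for every i = 1,…,U (i.e., the adjoint of Λ maps S to s, so S is a Gram-matrix representation of s), and moreover S is positive semidefinite if and only if Λ(w) = Λ(H(x)⁻¹·s) is positive semidefinite. -/

import Mathlib

open Matrix

/-- The gradient of the barrier `f(x) = -log det Λ(x)`:
`g(x)_i = -tr(Λ(x)⁻¹ · Λ(e_i))` (with the total matrix inverse, `0` for singular matrices). -/
noncomputable def grad {U L : ℕ} (Lam : (Fin U → ℝ) →ₗ[ℝ] Matrix (Fin L) (Fin L) ℝ)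
    (x : Fin U → ℝ) : Fin U → ℝ :=
  fun i => -((Lam x)⁻¹ * Lam (Pi.single i 1)).trace

/-- The Hessian of the barrier: `H(x)_{ij} = tr(Λ(x)⁻¹ Λ(e_i) Λ(x)⁻¹ Λ(e_j))`. -/
noncomputable def hess {U L : ℕ} (Lam : (Fin U → ℝ) →ₗ[ℝ] Matrix (Fin L) (Fin L) ℝ)
    (x : Fin U → ℝ) : Matrix (Fin U) (Fin U) ℝ :=
  Matrix.of fun i j =>
    ((Lam x)⁻¹ * Lam (Pi.single i 1) * (Lam x)⁻¹ * Lam (Pi.single j 1)).trace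

/-- The local norm `‖v‖_x = (vᵀ H(x) v)^{1/2}`. -/
noncomputable def locNorm {U L : ℕ} (Lam : (Fin U → ℝ) →ₗ[ℝ] Matrix (Fin L) (Fin L) ℝ)
    (x v : Fin U → ℝ) : ℝ :=
  Real.sqrt (v ⬝ᵥ (hess Lam x).mulVec v)

/-- The dual local norm `‖t‖*_x = (tᵀ H(x)⁻¹ t)^{1/2}`. -/
noncomputable def dualNorm {U L : ℕ} (Lam : (Fin U → ℝ) →ₗ[ℝ] Matrix (Fin L) (Fin L) ℝ)
    (x t : Fin U → ℝ) : ℝ :=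
  Real.sqrt (t ⬝ᵥ (hess Lam x)⁻¹.mulVec t)

/-! The Hessian's bilinear form is `vᵀ H(x) t = tr(Λ(x)⁻¹ Λ(v) Λ(x)⁻¹ Λ(t))`, which is symmetric in
`v, t`; with `v = e_i` and `t = w` it gives `tr(S Λ(e_i)) = (H(x) w)_i = s_i`. For `v = t` and
`Λ(x)⁻¹ = BᴴB` it is the squared Frobenius norm of `B Λ(v) Bᴴ`, positive for `v ≠ 0` by injectivity,
so `H(x)` is invertible and `H(x) w = s`. Finally `S` is the congruence of `Λ(w)` by the invertible
symmetric matrix `Λ(x)⁻¹`, and congruence preserves positive semidefiniteness. -/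

namespace Matrix

variable {n : Type*} [Fintype n]

theorem trace_mul_mul_mul_comm {R : Type*} [CommSemiring R] (P X Y : Matrix n n R) :
    (P * X * P * Y).trace = (P * Y * P * X).trace := by
  simpa only [Matrix.mul_assoc] using trace_mul_comm (P * X) (P * Y)

open scoped MatrixOrder in
theorem PosDef.trace_mul_mul_mul_pos [DecidableEq n] {P N : Matrix n n ℝ} (hP : P.PosDef)
    (hN : N.IsHermitian) (hN0 : N ≠ 0) : 0 < (P * N * P * N).trace := by
  obtain ⟨B, hB, rfl⟩ :=
    CStarAlgebra.isStrictlyPositive_iff_eq_star_mul_self.mp hP.isStrictlyPositive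
  set M := B * N * Bᴴ
  have hM : Mᴴ = M := by
    simp only [M, conjTranspose_mul, conjTranspose_conjTranspose, hN.eq, Matrix.mul_assoc]
  have hM0 : M ≠ 0 := by
    rwa [Ne, show M = B * N * star B from rfl, hB.star.mul_left_eq_zero, hB.mul_right_eq_zero]
  have htrace : (star B * B * N * (star B * B) * N).trace = (Mᴴ * M).trace := by
    rw [hM, star_eq_conjTranspose]
    simpa only [M, Matrix.mul_assoc] using trace_mul_comm Bᴴ (B * N * Bᴴ * B * N)
  rw [htrace]
  exact (posSemidef_conjTranspose_mul_self M).trace_nonneg.lt_of_ne'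
    (trace_conjTranspose_mul_self_eq_zero_iff.not.mpr hM0)

end Matrix

section Barrier

variable {U L : ℕ} (Lam : (Fin U → ℝ) →ₗ[ℝ] Matrix (Fin L) (Fin L) ℝ) (x : Fin U → ℝ)

theorem dotProduct_hess_mulVec (v t : Fin U → ℝ) :
    v ⬝ᵥ hess Lam x *ᵥ t = ((Lam x)⁻¹ * Lam v * (Lam x)⁻¹ * Lam t).trace := by
  conv_rhs => rw [pi_eq_sum_univ' v, pi_eq_sum_univ' t]
  simp only [map_sum, map_smul, Matrix.sum_mul, Matrix.mul_smul,
    Matrix.smul_mul, trace_sum, trace_smul, smul_eq_mul, dotProduct, mulVec, hess, of_apply,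
    Finset.mul_sum]
  rw [Finset.sum_comm]
  exact Finset.sum_congr rfl fun i _ => Finset.sum_congr rfl fun j _ => by ring

theorem hess_isHermitian : (hess Lam x).IsHermitian := by
  rw [isHermitian_iff_isSymm]
  ext i j
  exact trace_mul_mul_mul_comm (Lam x)⁻¹ _ _

theorem hess_posDef (hinj : Function.Injective Lam) (hsym : ∀ v, (Lam v).IsSymm)
    (hx : (Lam x).PosDef) : (hess Lam x).PosDef := by
  refine .of_dotProduct_mulVec_pos (hess_isHermitian Lam x) fun v hv => ?_
  rw [star_trivial, dotProduct_hess_mulVec]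
  refine hx.inv.trace_mul_mul_mul_pos (isHermitian_iff_isSymm.mpr (hsym v)) ?_
  rwa [Ne, ← map_zero Lam, hinj.eq_iff]

end Barrier

theorem stmt7_general {U L : ℕ}
    (Lam : (Fin U → ℝ) →ₗ[ℝ] Matrix (Fin L) (Fin L) ℝ)
    (hinj : Function.Injective Lam) (hsym : ∀ v, (Lam v).IsSymm)
    (x : Fin U → ℝ) (hx : (Lam x).PosDef) (s : Fin U → ℝ)
    (w : Fin U → ℝ) (hw : w = (hess Lam x)⁻¹.mulVec s)
    (S : Matrix (Fin L) (Fin L) ℝ) (hS : S = (Lam x)⁻¹ * Lam w * (Lam x)⁻¹) :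
    (∀ i, (S * Lam (Pi.single i 1)).trace = s i) ∧
      (S.PosSemidef ↔ (Lam w).PosSemidef) := by
  have hHw : hess Lam x *ᵥ w = s := by
    rw [hw, mulVec_mulVec, mul_nonsing_inv _ (hess_posDef Lam x hinj hsym hx).det_pos.ne'.isUnit,
      one_mulVec]
  subst hS
  refine ⟨fun i => ?_, ?_⟩
  · rw [trace_mul_mul_mul_comm, ← dotProduct_hess_mulVec, single_one_dotProduct, hHw]
  · have hinv : star (Lam x)⁻¹ = (Lam x)⁻¹ := hx.inv.isHermitian.eq
    have := hx.inv.isUnit.posSemidef_star_left_conjugate_iff (x := Lam w)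
    rwa [hinv] at this

/-- with `w = H(x)⁻¹s` and `S = Λ(x)⁻¹ Λ(w) Λ(x)⁻¹`, one has
`tr(S·Λ(e_i)) = s_i` for all `i` (so `Λ* S = s`), and `S ⪰ 0 ↔ Λ(w) ⪰ 0`. -/
theorem stmt7 {U L : ℕ} (hU : 0 < U) (hL : 0 < L)
    (Lam : (Fin U → ℝ) →ₗ[ℝ] Matrix (Fin L) (Fin L) ℝ)
    (hinj : Function.Injective Lam) (hsym : ∀ v, (Lam v).IsSymm)
    (x : Fin U → ℝ) (hx : (Lam x).PosDef) (s : Fin U → ℝ)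
    (w : Fin U → ℝ) (hw : w = (hess Lam x)⁻¹.mulVec s)
    (S : Matrix (Fin L) (Fin L) ℝ) (hS : S = (Lam x)⁻¹ * Lam w * (Lam x)⁻¹) :
    (∀ i, (S * Lam (Pi.single i 1)).trace = s i) ∧
      (S.PosSemidef ↔ (Lam w).PosSemidef) :=
  stmt7_general Lam hinj hsym x hx s w hw S hS
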